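/- arXiv:2502.05460 — 2 statements merged into one kernel-verified Lean document; each statement's English description precedes it below -/
import Mathlib

section
/- For m independent p-values where the p-values corresponding to true null hypotheses are uniformly distributed on [0,1], the Benjamini–Hochberg procedure at level γ (rejecting hypotheses with p-value at most p_{(k*)} where k* = max{k : p_{(k)} ≤ γk/m}) has false discovery rate equal to (m₀/m)·γ, where m₀ is the number of true nulls; in particular FDR ≤ γ. -/
open MeasureTheory ProbabilityTheory Finset

open Classical in
/-- The largest `k ≤ m` such that at least `k` of the p-values are `≤ γ k / m`
(equivalently, `p_{(k)} ≤ γ k / m` for the `k`-th smallest p-value). -/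
noncomputable def bhKstar (m : ℕ) (γ : ℝ) (pv : Fin m → ℝ) : ℕ :=
  Nat.findGreatest (fun k => k ≤ (Finset.univ.filter (fun i => pv i ≤ γ * k / m)).card) m

open Classical in
/-- The Benjamini–Hochberg rejection set at level `γ`: reject all hypotheses whose
p-value is at most `γ k* / m`, i.e. at most the `k*`-th smallest p-value threshold. -/
noncomputable def bhReject (m : ℕ) (γ : ℝ) (pv : Fin m → ℝ) : Finset (Fin m) :=
  Finset.univ.filter (fun j => pv j ≤ γ * (bhKstar m γ pv) / m)

namespace BHFDR

variable {m : ℕ} {γ : ℝ}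

open Classical in
lemma mem_rej {pv : Fin m → ℝ} {j : Fin m} :
    j ∈ bhReject m γ pv ↔ pv j ≤ γ * (bhKstar m γ pv) / m := by
  simp [bhReject]

open Classical in
lemma kstar_le (pv : Fin m → ℝ) : bhKstar m γ pv ≤ m := Nat.findGreatest_le m

open Classical in
lemma kstar_spec {pv : Fin m → ℝ} (h : bhKstar m γ pv ≠ 0) :
    bhKstar m γ pv ≤ (Finset.univ.filter (fun i => pv i ≤ γ * (bhKstar m γ pv) / m)).card :=
  Nat.findGreatest_of_ne_zero
    (P := fun k => k ≤ (Finset.univ.filter (fun i => pv i ≤ γ * k / m)).card) (n := m) rfl h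

open Classical in
lemma card_rej (hγ0 : 0 ≤ γ) (pv : Fin m → ℝ) :
    (bhReject m γ pv).card = bhKstar m γ pv := by
  set k := bhKstar m γ pv with hk
  have hle : k ≤ (bhReject m γ pv).card := by
    rcases Nat.eq_zero_or_pos k with h0 | hpos
    · simp [h0]
    · simpa [bhReject, ← hk] using kstar_spec (pv := pv) (by omega)
  refine le_antisymm ?_ hle
  by_contra hlt
  push_neg at hlt
  set r := (bhReject m γ pv).card with hr
  have hcardm : r ≤ m := by
    simpa [hr, bhReject] using Finset.card_filter_le Finset.univ
      (fun j => pv j ≤ γ * (bhKstar m γ pv) / m)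
  have hpred : r ≤ (Finset.univ.filter (fun i => pv i ≤ γ * (r : ℕ) / m)).card := by
    refine le_trans le_rfl (Finset.card_le_card ?_)
    intro i hi
    simp only [bhReject, Finset.mem_filter, Finset.mem_univ, true_and] at hi ⊢
    refine hi.trans ?_
    gcongr
  exact Nat.findGreatest_is_greatest
    (P := fun k => k ≤ (Finset.univ.filter (fun i => pv i ≤ γ * k / m)).card) (n := m)
    hlt hcardm hpred

open Classical in
lemma kstar_mono {pv pv' : Fin m → ℝ} (h : ∀ i, pv' i ≤ pv i) :
    bhKstar m γ pv ≤ bhKstar m γ pv' := by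
  unfold bhKstar
  refine Nat.findGreatest_mono (fun k hk => le_trans hk (Finset.card_le_card ?_)) le_rfl
  intro i hi
  simp only [Finset.mem_filter, Finset.mem_univ, true_and] at hi ⊢
  exact le_trans (h i) hi

open Classical in
lemma kstar_update_pos (hm : 0 < m) (hγ : 0 < γ) (pv : Fin m → ℝ) (j : Fin m) :
    1 ≤ bhKstar m γ (Function.update pv j 0) := by
  unfold bhKstar
  refine Nat.le_findGreatest hm ?_
  have hj : j ∈ Finset.univ.filter (fun i => Function.update pv j 0 i ≤ γ * ((1:ℕ):ℝ) / m) := by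
    simp only [Finset.mem_filter, Finset.mem_univ, true_and, Function.update_self]
    positivity
  exact Finset.card_pos.mpr ⟨j, hj⟩

open Classical in
lemma kstar_update (hm : 0 < m) (hγ : 0 < γ) {pv : Fin m → ℝ} {j : Fin m}
    (h : pv j ≤ γ * (bhKstar m γ (Function.update pv j 0)) / m) :
    bhKstar m γ pv = bhKstar m γ (Function.update pv j 0) := by
  set R := bhKstar m γ (Function.update pv j 0) with hR
  have hR1 : 1 ≤ R := kstar_update_pos hm hγ pv j
  have hRm : R ≤ m := kstar_le _
  have hfilt : ∀ k : ℕ, R ≤ k →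
      (Finset.univ.filter (fun i => pv i ≤ γ * k / m)) =
      (Finset.univ.filter (fun i => Function.update pv j 0 i ≤ γ * k / m)) := by
    intro k hk
    ext i
    simp only [Finset.mem_filter, Finset.mem_univ, true_and]
    by_cases hij : i = j
    · subst hij
      have h1 : pv i ≤ γ * k / m := h.trans (by gcongr)
      have h3 : (0:ℝ) ≤ γ * k / m := by positivity
      simp [h1, Function.update_self, h3]
    · rw [Function.update_of_ne hij]
  have hpred0 : R ≤ (Finset.univ.filter
      (fun i => Function.update pv j 0 i ≤ γ * (R : ℕ) / m)).card :=
    kstar_spec (by omega)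
  have hpred : R ≤ (Finset.univ.filter (fun i => pv i ≤ γ * (R : ℕ) / m)).card := by
    rw [hfilt R le_rfl]; exact hpred0
  have le1 : R ≤ bhKstar m γ pv :=
    Nat.le_findGreatest
      (P := fun k => k ≤ (Finset.univ.filter (fun i => pv i ≤ γ * k / m)).card) hRm hpred
  refine le_antisymm ?_ le1
  by_contra hlt
  push_neg at hlt
  have hKm : bhKstar m γ pv ≤ m := kstar_le _
  have hpredK : bhKstar m γ pv ≤ (Finset.univ.filter
      (fun i => pv i ≤ γ * (bhKstar m γ pv : ℕ) / m)).card := kstar_spec (by omega)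
  rw [hfilt _ hlt.le] at hpredK
  exact Nat.findGreatest_is_greatest
    (P := fun k => k ≤ (Finset.univ.filter
      (fun i => Function.update pv j 0 i ≤ γ * k / m)).card) (n := m)
    hlt hKm hpredK

open Classical in
lemma mem_rej_iff (hm : 0 < m) (hγ : 0 < γ) (pv : Fin m → ℝ) (j : Fin m) :
    j ∈ bhReject m γ pv ↔ pv j ≤ γ * (bhKstar m γ (Function.update pv j 0)) / m := by
  set R := bhKstar m γ (Function.update pv j 0) with hR
  constructor
  · intro hj
    rw [mem_rej] at hj
    by_cases h0 : 0 ≤ pv j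
    · have hmono : bhKstar m γ pv ≤ R := by
        apply kstar_mono
        intro i
        by_cases hij : i = j
        · subst hij; simpa [Function.update_self] using h0
        · rw [Function.update_of_ne hij]
      refine hj.trans ?_
      gcongr
    · push_neg at h0
      have : (0:ℝ) ≤ γ * R / m := by positivity
      linarith
  · intro h
    rw [mem_rej, kstar_update hm hγ h]
    exact h

open Classical in
lemma term_eq (hm : 0 < m) (hγ : 0 < γ) (pv : Fin m → ℝ) (j : Fin m) :
    (if j ∈ bhReject m γ pv then (1:ℝ) else 0) / max ((bhReject m γ pv).card : ℝ) 1 =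
    ∑ r ∈ Finset.Icc 1 m, (if bhKstar m γ (Function.update pv j 0) = r ∧
        pv j ≤ γ * r / m then (r:ℝ)⁻¹ else 0) := by
  set R := bhKstar m γ (Function.update pv j 0) with hR
  have hR1 : 1 ≤ R := kstar_update_pos hm hγ pv j
  have hRm : R ≤ m := kstar_le _
  have hsum : (∑ r ∈ Finset.Icc 1 m, (if R = r ∧ pv j ≤ γ * r / m then (r:ℝ)⁻¹ else 0)) =
      if pv j ≤ γ * R / m then (R:ℝ)⁻¹ else 0 := by
    rw [Finset.sum_eq_single_of_mem R (Finset.mem_Icc.mpr ⟨hR1, hRm⟩)]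
    · simp
    · intro r _ hr
      simp [Ne.symm hr]
  rw [hsum]
  by_cases h : pv j ≤ γ * R / m
  · have hmem : j ∈ bhReject m γ pv := (mem_rej_iff hm hγ pv j).mpr h
    have hcard : ((bhReject m γ pv).card : ℝ) = (R : ℝ) := by
      rw [card_rej hγ.le, kstar_update hm hγ h]
    rw [hcard, if_pos hmem, if_pos h]
    rw [max_eq_left (by exact_mod_cast hR1)]
    exact one_div _
  · have hmem : j ∉ bhReject m γ pv := fun hc => h ((mem_rej_iff hm hγ pv j).mp hc)
    rw [if_neg hmem, if_neg h, zero_div]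

open Classical in
lemma fdp_eq (hm : 0 < m) (hγ : 0 < γ) (pv : Fin m → ℝ) (N : Finset (Fin m)) :
    ((bhReject m γ pv ∩ N).card : ℝ) / max ((bhReject m γ pv).card : ℝ) 1 =
    ∑ j ∈ N, ∑ r ∈ Finset.Icc 1 m,
      (if bhKstar m γ (Function.update pv j 0) = r ∧ pv j ≤ γ * r / m
        then (r:ℝ)⁻¹ else 0) := by
  have hcard : ((bhReject m γ pv ∩ N).card : ℝ) =
      ∑ j ∈ N, (if j ∈ bhReject m γ pv then (1:ℝ) else 0) := by
    rw [Finset.inter_comm, ← Finset.filter_mem_eq_inter, Finset.card_filter]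
    push_cast
    exact Finset.sum_congr rfl fun j _ => by split_ifs <;> simp
  rw [hcard, Finset.sum_div]
  exact Finset.sum_congr rfl fun j _ => term_eq hm hγ pv j

open Classical in
lemma measurable_kstar : Measurable (fun pv : Fin m → ℝ => bhKstar m γ pv) := by
  unfold bhKstar
  apply measurable_findGreatest
  intro k _
  have hc : Measurable (fun pv : Fin m → ℝ =>
      (Finset.univ.filter (fun i => pv i ≤ γ * k / m)).card) := by
    simp only [Finset.card_filter]
    apply Finset.measurable_sum
    intro i _
    exact Measurable.ite (measurableSet_le (measurable_pi_apply i) measurable_const)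
      measurable_const measurable_const
  exact measurableSet_le measurable_const hc

end BHFDR

/-- For `m` independent p-values whose null coordinates are Uniform[0,1], the
Benjamini–Hochberg procedure at level `γ` has FDR exactly `(m₀/m)·γ`, hence `≤ γ`. -/
theorem bh_fdr_eq {Ω : Type*} [MeasurableSpace Ω] (P : Measure Ω) [IsProbabilityMeasure P]
    (m : ℕ) (hm : 0 < m) (p : Fin m → Ω → ℝ) (hmeas : ∀ j, Measurable (p j))
    (hindep : iIndepFun p P)
    (N : Finset (Fin m)) (m₀ : ℕ) (hN : N.card = m₀)
    (hunif : ∀ j ∈ N, Measure.map (p j) P = volume.restrict (Set.Icc (0 : ℝ) 1))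
    (γ : ℝ) (hγ : γ ∈ Set.Ioo (0 : ℝ) 1) :
    (∫ ω, (((bhReject m γ (fun j => p j ω)) ∩ N).card : ℝ) /
        max ((bhReject m γ (fun j => p j ω)).card) 1 ∂P) = ((m₀ : ℝ) / m) * γ ∧
    (∫ ω, (((bhReject m γ (fun j => p j ω)) ∩ N).card : ℝ) /
        max ((bhReject m γ (fun j => p j ω)).card) 1 ∂P) ≤ γ := by
  classical
  obtain ⟨hγ0, hγ1⟩ := hγ
  set K : (Fin m → ℝ) → ℕ := fun pv => bhKstar m γ pv with hKdef
  have hKmeas : Measurable K := BHFDR.measurable_kstar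
  set g : Fin m → Ω → (Fin m → ℝ) := fun j ω => Function.update (fun i => p i ω) j 0 with hgdef
  have hgmeas : ∀ j, Measurable (g j) := by
    intro j
    apply measurable_pi_lambda
    intro i
    by_cases hij : i = j
    · subst hij
      simpa only [hgdef, Function.update_self] using (measurable_const : Measurable fun _ : Ω => (0:ℝ))
    · simpa only [hgdef, Function.update_of_ne hij] using hmeas i
  -- the basic events
  set A : Fin m → ℕ → Set Ω := fun j r => (g j) ⁻¹' (K ⁻¹' {r}) with hAdef
  set B : Fin m → ℕ → Set Ω := fun j r => (p j) ⁻¹' (Set.Iic (γ * r / m)) with hBdef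
  have hAmeas : ∀ j r, MeasurableSet (A j r) :=
    fun j r => (hgmeas j) (hKmeas (measurableSet_singleton r))
  have hBmeas : ∀ j r, MeasurableSet (B j r) := fun j r => (hmeas j) measurableSet_Iic
  -- rewrite the integrand
  have hint : ∀ ω, (((bhReject m γ (fun j => p j ω)) ∩ N).card : ℝ) /
      max ((bhReject m γ (fun j => p j ω)).card) 1 =
      ∑ j ∈ N, ∑ r ∈ Finset.Icc 1 m,
        Set.indicator (A j r ∩ B j r) (fun _ => (r:ℝ)⁻¹) ω := by
    intro ω
    rw [Nat.cast_max, Nat.cast_one, BHFDR.fdp_eq hm hγ0 (fun j => p j ω) N]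
    refine Finset.sum_congr rfl fun j _ => Finset.sum_congr rfl fun r _ => ?_
    simp only [Set.indicator_apply, Set.mem_inter_iff, Set.mem_preimage,
      Set.mem_singleton_iff, Set.mem_Iic, hAdef, hBdef, hKdef, hgdef]
  -- independence of A and B events
  have hindepFun : ∀ j, IndepFun (g j) (p j) P := by
    intro j
    have h1 := hindep.indepFun_finset ({j}ᶜ : Finset (Fin m)) {j}
      (by simp) hmeas
    set φ : ((i : (({j}ᶜ : Finset (Fin m)) : Finset (Fin m))) → ℝ) → (Fin m → ℝ) :=
      fun v i => if hij : i = j then 0 else v ⟨i, by simp [hij]⟩ with hφdef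
    have hφ : Measurable φ := by
      apply measurable_pi_lambda
      intro i
      by_cases hij : i = j
      · simpa only [hφdef, dif_pos hij] using (measurable_const : Measurable fun _ => (0:ℝ))
      · simpa only [hφdef, dif_neg hij] using
          measurable_pi_apply (⟨i, by simp [hij]⟩ : (({j}ᶜ : Finset (Fin m)) : Finset (Fin m)))
    set ψ : ((i : (({j} : Finset (Fin m)) : Finset (Fin m))) → ℝ) → ℝ :=
      fun v => v ⟨j, Finset.mem_singleton_self j⟩ with hψdef
    have hψ : Measurable ψ := measurable_pi_apply _
    have h2 : g j = φ ∘ (fun ω (i : (({j}ᶜ : Finset (Fin m)) : Finset (Fin m))) => p i ω) := by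
      funext ω
      funext i
      by_cases hij : i = j
      · subst hij
        simp [hgdef, hφdef, Function.update_self]
      · simp [hgdef, hφdef, Function.update_of_ne hij, hij]
    have h3 : p j = ψ ∘ (fun ω (i : (({j} : Finset (Fin m)) : Finset (Fin m))) => p i ω) := rfl
    rw [h2, h3]
    exact h1.comp hφ hψ
  -- probability of B events
  have hPB : ∀ j ∈ N, ∀ r ∈ Finset.Icc 1 m,
      P (B j r) = ENNReal.ofReal (γ * r / m) := by
    intro j hj r hr
    have hrm : (r : ℝ) ≤ m := by exact_mod_cast (Finset.mem_Icc.mp hr).2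
    have hc0 : (0:ℝ) ≤ γ * r / m := by positivity
    have hc1 : γ * r / m ≤ 1 := by
      rw [div_le_one (by exact_mod_cast hm)]
      nlinarith [hγ0.le, hγ1.le, Nat.cast_nonneg (α := ℝ) r]
    have hset : Set.Iic (γ * r / m) ∩ Set.Icc (0:ℝ) 1 = Set.Icc 0 (γ * r / m) := by
      ext x
      simp only [Set.mem_inter_iff, Set.mem_Iic, Set.mem_Icc]
      constructor
      · rintro ⟨h1, h2, _⟩; exact ⟨h2, h1⟩
      · rintro ⟨h1, h2⟩; exact ⟨h2, h1, h2.trans hc1⟩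
    rw [hBdef]
    rw [← Measure.map_apply (hmeas j) measurableSet_Iic, hunif j hj,
      Measure.restrict_apply measurableSet_Iic, hset, Real.volume_Icc]
    simp
  -- A events partition, for each j
  have hKg1 : ∀ j ω, 1 ≤ K (g j ω) := fun j ω => BHFDR.kstar_update_pos hm hγ0 _ j
  have hKgm : ∀ j ω, K (g j ω) ≤ m := fun j ω => BHFDR.kstar_le _
  have hPA : ∀ j, ∑ r ∈ Finset.Icc 1 m, (P (A j r)).toReal = 1 := by
    intro j
    have hdisj : Set.PairwiseDisjoint (↑(Finset.Icc 1 m) : Set ℕ) (A j) := by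
      intro r _ r' _ hrr'
      rw [Function.onFun, Set.disjoint_left]
      rintro ω h1 h2
      exact hrr' (h1.symm.trans h2)
    have hunion : (⋃ r ∈ Finset.Icc 1 m, A j r) = Set.univ := by
      ext ω
      simp only [Set.mem_iUnion, Set.mem_univ, iff_true, Set.mem_preimage,
        Set.mem_singleton_iff, hAdef]
      exact ⟨K (g j ω), Finset.mem_Icc.mpr ⟨hKg1 j ω, hKgm j ω⟩, rfl⟩
    have hsum : ∑ r ∈ Finset.Icc 1 m, P (A j r) = 1 := by
      rw [← measure_biUnion_finset hdisj (fun r _ => hAmeas j r), hunion, measure_univ]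
    rw [← ENNReal.toReal_sum (fun r _ => measure_ne_top P _), hsum, ENNReal.toReal_one]
  -- integrability
  have hinteg : ∀ j r, Integrable
      (Set.indicator (A j r ∩ B j r) (fun _ => (r:ℝ)⁻¹)) P :=
    fun j r => (integrable_const _).indicator ((hAmeas j r).inter (hBmeas j r))
  -- compute the integral
  have hval : (∫ ω, (((bhReject m γ (fun j => p j ω)) ∩ N).card : ℝ) /
      max ((bhReject m γ (fun j => p j ω)).card) 1 ∂P) = ((m₀ : ℝ) / m) * γ := by
    rw [integral_congr_ae (Filter.Eventually.of_forall hint)]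
    rw [integral_finset_sum N (fun j _ => integrable_finset_sum _ (fun r _ => hinteg j r))]
    have hterm : ∀ j ∈ N, (∫ ω, ∑ r ∈ Finset.Icc 1 m,
        Set.indicator (A j r ∩ B j r) (fun _ => (r:ℝ)⁻¹) ω ∂P) = γ / m := by
      intro j hj
      rw [integral_finset_sum _ (fun r _ => hinteg j r)]
      have hterm2 : ∀ r ∈ Finset.Icc 1 m,
          (∫ ω, Set.indicator (A j r ∩ B j r) (fun _ => (r:ℝ)⁻¹) ω ∂P) =
          (γ / m) * (P (A j r)).toReal := by
        intro r hr
        have hr1 : 1 ≤ r := (Finset.mem_Icc.mp hr).1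
        have hrne : ((r:ℝ)) ≠ 0 := by positivity
        rw [integral_indicator_const _ ((hAmeas j r).inter (hBmeas j r))]
        have hPinter : P (A j r ∩ B j r) = P (A j r) * ENNReal.ofReal (γ * r / m) := by
          rw [← hPB j hj r hr]
          exact (hindepFun j).measure_inter_preimage_eq_mul _ _
            (hKmeas (measurableSet_singleton r)) measurableSet_Iic
        rw [measureReal_def, hPinter, ENNReal.toReal_mul, ENNReal.toReal_ofReal (by positivity)]
        rw [smul_eq_mul]
        field_simp
        try ring
      rw [Finset.sum_congr rfl hterm2, ← Finset.mul_sum, hPA j, mul_one]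
    rw [Finset.sum_congr rfl hterm, Finset.sum_const, hN, nsmul_eq_mul]
    field_simp
    try ring
  refine ⟨hval, ?_⟩
  rw [hval]
  have hm₀ : (m₀ : ℝ) ≤ m := by
    rw [← hN]
    exact_mod_cast (Finset.card_le_card (Finset.subset_univ N)).trans
      (by simp)
  have : (m₀ : ℝ) / m ≤ 1 := by
    rw [div_le_one (by exact_mod_cast hm)]
    exact hm₀
  nlinarith [hγ0.le]
end

section
/- In the two-groups empirical Bayes procedure with oracle local false discovery rates, rejecting the k hypotheses with smallest locfdr values, where k = max{j : (1/j)Σ_{l=1}^j locfdr_{(l)} ≤ γ}, yields conditional expected false discovery proportion at most γ: E[FD/R | data] = (1/k)Σ_{l=1}^k locfdr_{(l)} ≤ γ. -/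
open MeasureTheory ProbabilityTheory Finset

open Classical in
/-- Two-groups empirical Bayes procedure with oracle local false discovery rates:
`μ` is the posterior distribution of the null indicators `H` given the data, the
hypotheses are sorted so that `ℓ l = μ(H_l null)` is nondecreasing, and we reject the
`k` hypotheses with smallest locfdr where `k = max{j : (1/j) Σ_{l≤j} ℓ_(l) ≤ γ}`.
Then the conditional expected false discovery proportion is
`E[FD/R | data] = (1/k) Σ_{l=1}^k ℓ_(l) ≤ γ`. -/
theorem locfdr_procedure_conditional_fdr {Ω : Type*} [MeasurableSpace Ω]
    (μ : Measure Ω) [IsProbabilityMeasure μ] (m : ℕ) (hm : 0 < m)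
    (H : ℕ → Ω → Bool) (hmeas : ∀ l, Measurable (H l))
    (ℓ : ℕ → ℝ) (hℓ : ∀ l, ℓ l = (μ {ω | H l ω = true}).toReal)
    (hsorted : ∀ j l, 1 ≤ j → j ≤ l → l ≤ m → ℓ j ≤ ℓ l)
    (hindep : iIndepFun H μ)
    (γ : ℝ) (hγ : γ ∈ Set.Ioo (0 : ℝ) 1) (k : ℕ)
    (hk : k = Nat.findGreatest
        (fun j => (1 / (j : ℝ)) * ∑ l ∈ Finset.Icc 1 j, ℓ l ≤ γ) m)
    (hk1 : 1 ≤ k) :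
    (∫ ω, (((Finset.Icc 1 k).filter (fun l => H l ω = true)).card : ℝ) / k ∂μ)
        = (1 / (k : ℝ)) * ∑ l ∈ Finset.Icc 1 k, ℓ l ∧
    (1 / (k : ℝ)) * ∑ l ∈ Finset.Icc 1 k, ℓ l ≤ γ := by
  constructor
  · have hset : ∀ l, MeasurableSet {ω | H l ω = true} := fun l =>
      (hmeas l) (measurableSet_singleton true)
    have h1 : ∀ ω : Ω, (((Finset.Icc 1 k).filter (fun l => H l ω = true)).card : ℝ)
        = ∑ l ∈ Finset.Icc 1 k, Set.indicator {ω | H l ω = true} (fun _ => (1:ℝ)) ω := by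
      intro ω
      rw [Finset.card_filter]
      push_cast
      exact Finset.sum_congr rfl fun l _ => by simp [Set.indicator]
    simp_rw [h1]
    rw [integral_div, integral_finset_sum _ (fun l _ =>
      (integrable_const (1:ℝ)).indicator (hset l))]
    have h2 : ∀ l ∈ Finset.Icc 1 k,
        (∫ ω, Set.indicator {ω | H l ω = true} (fun _ => (1:ℝ)) ω ∂μ) = ℓ l := by
      intro l _
      rw [integral_indicator_const (1:ℝ) (hset l), hℓ l, smul_eq_mul, mul_one]
      rfl
    rw [Finset.sum_congr rfl h2, div_eq_mul_inv, mul_comm, one_div]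
  · have hP : (fun j : ℕ => (1 / (j : ℝ)) * ∑ l ∈ Finset.Icc 1 j, ℓ l ≤ γ) k := by
      exact Nat.findGreatest_of_ne_zero hk.symm (by omega)
    exact hP
end
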